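/- Let U be a finite set of unit vectors in ℝⁿ with pos(U) = ℝⁿ, and let U' ⊆ U be a linear basis of ℝⁿ. Then there exist linearly independent vectors x₁,…,x_k ∈ U \ U' with k ≤ n such that pos(U' ∪ {x₁,…,x_k}) = ℝⁿ; in particular the resulting positively spanning subset has at most 2n elements. -/

import Mathlib

/-!
Write `B` for the basis `U'`. Since `pos U` is everything, `-∑ B` is a nonnegative combination
of finitely many vectors of `U`. Carathéodory's reduction for cones, never discarding the
vectors of `B`, shrinks the remaining vectors to a linearly independent set `t ⊆ U \ B`, so
`|t| ≤ n`. The cone `pos (B ∪ t)` contains `B` and `-∑ B`, hence `-v` for every `v ∈ B`. So its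
lineality space contains the span of `B`, which is everything.
-/

noncomputable section

def pos {E : Type*} [AddCommMonoid E] [Module ℝ E] (M : Set E) : Set E :=
  {x | ∃ (s : Finset E) (c : E → ℝ),
    (↑s : Set E) ⊆ M ∧ (∀ v, 0 ≤ c v) ∧ x = ∑ v ∈ s, c v • v}

/-- Each `-v` with `v ∈ B` is `-∑ B` plus the other vectors of `B`, so the lineality space of `C`
contains `B`. -/
theorem PointedCone.eq_top_of_neg_sum_mem {R E : Type*} [Ring R] [LinearOrder R]
    [IsOrderedRing R] [AddCommGroup E] [Module R E] {C : PointedCone R E} {B : Finset E}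
    (hspan : Submodule.span R (B : Set E) = ⊤) (hB : (B : Set E) ⊆ C)
    (hneg : -∑ v ∈ B, v ∈ C) : C = ⊤ := by
  classical
  have hlineal : Submodule.span R (B : Set E) ≤ C.lineal := by
    refine Submodule.span_le.2 fun v hv => PointedCone.mem_lineal.2 ⟨hB hv, ?_⟩
    have : -v = -∑ u ∈ B, u + ∑ u ∈ B.erase v, u := by
      rw [← Finset.add_sum_erase B _ hv]
      abel
    rw [this]
    exact C.add_mem hneg (C.sum_mem fun u hu => hB (Finset.mem_of_mem_erase hu))
  rw [hspan] at hlineal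
  exact top_unique fun x _ => C.lineal_le (hlineal Submodule.mem_top)

section Cone

variable {E : Type*} [AddCommGroup E] [Module ℝ E]

theorem pos_mono {M N : Set E} (h : M ⊆ N) : pos M ⊆ pos N :=
  fun _ ⟨s, c, hs, hc, hx⟩ => ⟨s, c, hs.trans h, hc, hx⟩

theorem pos_eq_hull (M : Set E) : pos M = PointedCone.hull ℝ M := by
  ext x
  constructor
  · rintro ⟨s, c, hs, hc, rfl⟩
    exact Submodule.sum_mem _ fun v hv =>
      (PointedCone.hull ℝ M).smul_mem (hc v) (PointedCone.subset_hull (hs hv))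
  · rw [SetLike.mem_coe, PointedCone.mem_hull_set]
    rintro ⟨c, hcM, hc, rfl⟩
    exact ⟨c.support, c, hcM, hc, rfl⟩

theorem mem_pos_finset_iff {S : Finset E} {y : E} :
    y ∈ pos (S : Set E) ↔ ∃ c : E → ℝ, (∀ v ∈ S, 0 ≤ c v) ∧ y = ∑ v ∈ S, c v • v := by
  classical
  constructor
  · rintro ⟨s, c, hs, hc, rfl⟩
    refine ⟨fun v => if v ∈ s then c v else 0,
      fun v _ => by by_cases hv : v ∈ s <;> simp [hv, hc], ?_⟩
    rw [← Finset.sum_subset (Finset.coe_subset.1 hs) fun v _ hv => by simp [hv]]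
    exact Finset.sum_congr rfl fun v hv => by simp [hv]
  · rintro ⟨c, hc, rfl⟩
    exact ⟨S, fun v => max (c v) 0, subset_rfl, fun v => le_max_right _ _,
      Finset.sum_congr rfl fun v hv => by simp only [max_eq_left (hc v hv)]⟩

/-- Subtracting the largest multiple of the relation `d` that keeps all coefficients nonnegative
kills the coefficient at a minimiser of `c v / d v` over `d v > 0`. -/
theorem exists_mem_pos_erase_of_sum_eq_zero [DecidableEq E] {S : Finset E} {c d : E → ℝ}
    {y : E} (hc : ∀ v ∈ S, 0 ≤ c v) (hy : y = ∑ v ∈ S, c v • v) (hd : ∑ v ∈ S, d v • v = 0)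
    (hd_pos : ∃ v ∈ S, 0 < d v) :
    ∃ x ∈ S, 0 < d x ∧ y ∈ pos (S.erase x : Set E) := by
  obtain ⟨x, hxP, hmin⟩ := (S.filter fun v => 0 < d v).exists_min_image (fun v => c v / d v)
    (let ⟨v, hvS, hv⟩ := hd_pos; ⟨v, Finset.mem_filter.2 ⟨hvS, hv⟩⟩)
  obtain ⟨hxS, hdx⟩ := Finset.mem_filter.1 hxP
  set r := c x / d x
  have hr : 0 ≤ r := div_nonneg (hc x hxS) hdx.le
  have hc' : ∀ v ∈ S, 0 ≤ c v - r * d v := by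
    intro v hv
    rcases le_or_gt (d v) 0 with hdv | hdv
    · nlinarith [hc v hv]
    · have := (le_div_iff₀ hdv).1 (hmin v (Finset.mem_filter.2 ⟨hv, hdv⟩))
      linarith
  have hy' : y = ∑ v ∈ S, (c v - r * d v) • v := by
    simp only [sub_smul, mul_smul, Finset.sum_sub_distrib, ← Finset.smul_sum, hd, smul_zero,
      sub_zero, hy]
  have hcx : c x - r * d x = 0 := sub_eq_zero.2 (div_mul_cancel₀ _ hdx.ne').symm
  refine ⟨x, hxS, hdx,
    mem_pos_finset_iff.2 ⟨_, fun v hv => hc' v (Finset.mem_of_mem_erase hv), ?_⟩⟩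
  rw [Finset.sum_erase S (by rw [hcx, zero_smul]), hy']

theorem exists_sum_eq_zero_of_not_linearIndepOn {S T : Finset E} (hTS : T ⊆ S)
    (hT : ¬LinearIndepOn ℝ id (T : Set E)) :
    ∃ d : E → ℝ, ∑ v ∈ S, d v • v = 0 ∧ (∀ v ∉ T, d v = 0) ∧ ∃ x ∈ T, 0 < d x := by
  obtain ⟨f, hfT, hf, hf0⟩ := linearDepOn_iff.1 hT
  have hsupp : ∀ v ∉ T, f v = 0 := fun v hv =>
    Finsupp.notMem_support_iff.1 fun hv' => hv (hfT hv')
  have hsum : ∑ v ∈ S, f v • v = 0 := by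
    rw [← Finset.sum_subset (fun v hv => hTS (hfT hv)) fun v _ hv => by
      rw [Finsupp.notMem_support_iff.1 hv, zero_smul]]
    exact hf
  obtain ⟨x, hx⟩ := Finsupp.ne_iff.1 hf0
  have hxT : x ∈ T := by_contra fun h => hx (hsupp x h)
  rcases hx.lt_or_gt with hneg | hpos
  · refine ⟨fun v => -f v, ?_, fun v hv => by simp [hsupp v hv], x, hxT, by simpa using hneg⟩
    simp [neg_smul, hsum]
  · exact ⟨f, hsum, hsupp, x, hxT, hpos⟩

theorem exists_linearIndepOn_subset_mem_pos_union [DecidableEq E] (B t : Finset E) {y : E}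
    (hy : y ∈ pos (B ∪ t : Set E)) :
    ∃ t' ⊆ t, LinearIndepOn ℝ id (t' : Set E) ∧ y ∈ pos (B ∪ t' : Set E) := by
  induction t using Finset.strongInduction with
  | H t ih =>
    by_cases ht : LinearIndepOn ℝ id (t : Set E)
    · exact ⟨t, subset_rfl, ht, hy⟩
    rw [← Finset.coe_union] at hy
    obtain ⟨c, hc, hyc⟩ := mem_pos_finset_iff.1 hy
    obtain ⟨d, hd, hdt, x₀, hx₀, hdx₀⟩ :=
      exists_sum_eq_zero_of_not_linearIndepOn Finset.subset_union_right ht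
    obtain ⟨x, -, hdx, hyx⟩ := exists_mem_pos_erase_of_sum_eq_zero hc hyc hd
      ⟨x₀, Finset.mem_union_right B hx₀, hdx₀⟩
    have hxt : x ∈ t := by_contra fun h => hdx.ne' (hdt x h)
    have hsub : (B ∪ t).erase x ⊆ B ∪ t.erase x := by
      rw [Finset.erase_union_distrib]
      exact Finset.union_subset_union (Finset.erase_subset _ _) subset_rfl
    obtain ⟨t', ht', hli, hy'⟩ := ih (t.erase x) (Finset.erase_ssubset hxt)
      (by simpa using pos_mono (Finset.coe_subset.2 hsub) hyx)
    exact ⟨t', ht'.trans (Finset.erase_subset _ _), hli, hy'⟩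

theorem pos_eq_univ_of_neg_sum_mem {M : Set E} {B : Finset E}
    (hspan : Submodule.span ℝ (B : Set E) = ⊤) (hBM : (B : Set E) ⊆ M)
    (hneg : -∑ v ∈ B, v ∈ pos M) : pos M = Set.univ := by
  rw [pos_eq_hull, PointedCone.eq_top_of_neg_sum_mem hspan (hBM.trans PointedCone.subset_hull)
    (by rwa [← SetLike.mem_coe, ← pos_eq_hull])]
  rfl

end Cone

theorem stmt1 (n : ℕ) (U U' : Set (EuclideanSpace ℝ (Fin n)))
    (hpos : pos U = Set.univ)
    (hind : LinearIndependent ℝ (Subtype.val : U' → EuclideanSpace ℝ (Fin n)))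
    (hspan : Submodule.span ℝ U' = ⊤) :
    ∃ (k : ℕ) (x : Fin k → EuclideanSpace ℝ (Fin n)), k ≤ n ∧
      (∀ i, x i ∈ U \ U') ∧ LinearIndependent ℝ x ∧
      pos (U' ∪ Set.range x) = Set.univ ∧
      (U' ∪ Set.range x).ncard ≤ 2 * n := by
  classical
  have : Finite U' := hind.finite
  set B := U'.toFinite.toFinset
  have hB : (B : Set (EuclideanSpace ℝ (Fin n))) = U' := U'.toFinite.coe_toFinset
  obtain ⟨s, c, hsU, hc, hs⟩ : -∑ v ∈ B, v ∈ pos U := hpos ▸ Set.mem_univ _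
  obtain ⟨t, hts, hli, hmem⟩ := exists_linearIndepOn_subset_mem_pos_union B (s \ B)
    (pos_mono (by simp) ⟨s, c, subset_rfl, hc, hs⟩)
  have hBli : LinearIndepOn ℝ id (B : Set (EuclideanSpace ℝ (Fin n))) := by rw [hB]; exact hind
  have hBn : B.card ≤ n := hBli.finset_card_le_finrank.trans_eq finrank_euclideanSpace_fin
  have htn : t.card ≤ n := hli.finset_card_le_finrank.trans_eq finrank_euclideanSpace_fin
  have hrange : Set.range (Subtype.val ∘ t.equivFin.symm) = t := by simp
  refine ⟨t.card, Subtype.val ∘ t.equivFin.symm, htn, fun i => ?_,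
    hli.comp _ t.equivFin.symm.injective, ?_, ?_⟩
  · obtain ⟨his, hiB⟩ := Finset.mem_sdiff.1 (hts (t.equivFin.symm i).2)
    exact ⟨hsU his, hB ▸ hiB⟩
  · rw [hrange, ← hB]
    exact pos_eq_univ_of_neg_sum_mem (hB ▸ hspan) Set.subset_union_left hmem
  · rw [hrange, ← hB, ← Finset.coe_union, Set.ncard_coe_finset]
    exact (Finset.card_union_le _ _).trans (by omega)
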